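/- arXiv:1409.6859 — 2 statements merged into one kernel-verified Lean document; each statement's English description precedes it below -/
import Mathlib

section
/- Let f = 1 + e^{η₁} + e^{η₂} + e^{η₁+η₂+A₁₂}, where ηⱼ = μⱼx + νⱼy + κⱼz + ϖⱼt + γⱼ, ϖⱼ = −3μⱼκⱼ/νⱼ + μⱼ³ (νⱼ ≠ 0), and e^{A₁₂} = −[(ν₁−ν₂)(ϖ₁−ϖ₂) − (μ₁−μ₂)³(ν₁−ν₂) + 3(μ₁−μ₂)(κ₁−κ₂)] / [(ν₁+ν₂)(ϖ₁+ϖ₂) − (μ₁+μ₂)³(ν₁+ν₂) + 3(μ₁+μ₂)(κ₁+κ₂)] (assuming the denominator is nonzero). Then f satisfies the bilinear equation (D_y D_t − D_x^3 D_y + 3 D_x D_z) f·f = 0. -/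
open Complex

/-- `(∂_x - ∂_{x'})` acting on a function of `(x,y,z,t,x',y',z',t')`. -/
noncomputable def Dx (F : ℂ → ℂ → ℂ → ℂ → ℂ → ℂ → ℂ → ℂ → ℂ) :
    ℂ → ℂ → ℂ → ℂ → ℂ → ℂ → ℂ → ℂ → ℂ :=
  fun x y z t x' y' z' t' =>
    deriv (fun s => F s y z t x' y' z' t') x - deriv (fun s => F x y z t s y' z' t') x'

/-- `(∂_y - ∂_{y'})`. -/
noncomputable def Dy (F : ℂ → ℂ → ℂ → ℂ → ℂ → ℂ → ℂ → ℂ → ℂ) :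
    ℂ → ℂ → ℂ → ℂ → ℂ → ℂ → ℂ → ℂ → ℂ :=
  fun x y z t x' y' z' t' =>
    deriv (fun s => F x s z t x' y' z' t') y - deriv (fun s => F x y z t x' s z' t') y'

/-- `(∂_z - ∂_{z'})`. -/
noncomputable def Dz (F : ℂ → ℂ → ℂ → ℂ → ℂ → ℂ → ℂ → ℂ → ℂ) :
    ℂ → ℂ → ℂ → ℂ → ℂ → ℂ → ℂ → ℂ → ℂ :=
  fun x y z t x' y' z' t' =>
    deriv (fun s => F x y s t x' y' z' t') z - deriv (fun s => F x y z t x' y' s t') z'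

/-- `(∂_t - ∂_{t'})`. -/
noncomputable def Dt (F : ℂ → ℂ → ℂ → ℂ → ℂ → ℂ → ℂ → ℂ → ℂ) :
    ℂ → ℂ → ℂ → ℂ → ℂ → ℂ → ℂ → ℂ → ℂ :=
  fun x y z t x' y' z' t' =>
    deriv (fun s => F x y z s x' y' z' t') t - deriv (fun s => F x y z t x' y' z' s) t'

/-- The Hirota bilinear operator `D_x^m D_y^n D_z^p D_t^k f·g` evaluated at `(x,y,z,t)`. -/
noncomputable def hirota (m n p k : ℕ) (f g : ℂ → ℂ → ℂ → ℂ → ℂ) (x y z t : ℂ) : ℂ :=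
  (Dx^[m] (Dy^[n] (Dz^[p] (Dt^[k]
    (fun x y z t x' y' z' t' => f x y z t * g x' y' z' t'))))) x y z t x y z t

/-! For `f = ∑ Cᵢ e^{ηᵢ}` with `ηᵢ = pᵢ·(x, y, z, t) + γᵢ`, the operators `D_x, …, D_t` act on
`f(x, …) f(x', …)` diagonally, multiplying the `(i, j)` term by the corresponding component of
`pᵢ - pⱼ`. Hence `P(D) f·f = ∑ Cᵢ Cⱼ P(pᵢ - pⱼ) e^{ηᵢ + ηⱼ}`. The symbol `P` is even and, by the
dispersion relation defining `ϖⱼ`, vanishes at `p₁` and `p₂`; so for the two-soliton `f` only the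
products `1 · e^{η₁+η₂+A₁₂}` and `e^{η₁} · e^{η₂}` survive, contributing
`2 e^{η₁ + η₂} (e^{A₁₂} P(p₁ + p₂) + P(p₁ - p₂))`, which is zero by the choice of `e^{A₁₂}`. -/

section

variable {ι : Type*} [Fintype ι]

theorem deriv_sum_mul_cexp_affine (C α : ι → ℂ) {L : ι → ℂ → ℂ}
    (hL : ∀ i s, L i s = α i * s + L i 0) (s : ℂ) :
    deriv (fun s => ∑ i, C i * exp (L i s)) s = ∑ i, α i * C i * exp (L i s) := by
  refine (HasDerivAt.fun_sum fun i _ => ?_).deriv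
  have hLi : HasDerivAt (L i) (α i) s := by
    refine HasDerivAt.congr_of_eventuallyEq ?_ (Filter.Eventually.of_forall (hL i))
    simpa using ((hasDerivAt_id s).const_mul (α i)).add_const (L i 0)
  rw [show α i * C i * exp (L i s) = C i * (exp (L i s) * α i) by ring]
  exact hLi.cexp.const_mul (C i)

noncomputable def biExpSum (C a b c d a' b' c' d' g : ι → ℂ) :
    ℂ → ℂ → ℂ → ℂ → ℂ → ℂ → ℂ → ℂ → ℂ :=
  fun x y z t x' y' z' t' => ∑ i, C i * exp
    (a i * x + b i * y + c i * z + d i * t + a' i * x' + b' i * y' + c' i * z' + d' i * t' + g i)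

variable (C a b c d a' b' c' d' g : ι → ℂ)

theorem Dx_biExpSum :
    Dx (biExpSum C a b c d a' b' c' d' g)
      = biExpSum (fun i => (a i - a' i) * C i) a b c d a' b' c' d' g := by
  funext x y z t x' y' z' t'
  simp only [Dx, biExpSum]
  rw [deriv_sum_mul_cexp_affine C a (fun i s => by ring),
    deriv_sum_mul_cexp_affine C a' (fun i s => by ring), ← Finset.sum_sub_distrib]
  exact Finset.sum_congr rfl fun i _ => by ring

theorem Dy_biExpSum :
    Dy (biExpSum C a b c d a' b' c' d' g)
      = biExpSum (fun i => (b i - b' i) * C i) a b c d a' b' c' d' g := by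
  funext x y z t x' y' z' t'
  simp only [Dy, biExpSum]
  rw [deriv_sum_mul_cexp_affine C b (fun i s => by ring),
    deriv_sum_mul_cexp_affine C b' (fun i s => by ring), ← Finset.sum_sub_distrib]
  exact Finset.sum_congr rfl fun i _ => by ring

theorem Dz_biExpSum :
    Dz (biExpSum C a b c d a' b' c' d' g)
      = biExpSum (fun i => (c i - c' i) * C i) a b c d a' b' c' d' g := by
  funext x y z t x' y' z' t'
  simp only [Dz, biExpSum]
  rw [deriv_sum_mul_cexp_affine C c (fun i s => by ring),
    deriv_sum_mul_cexp_affine C c' (fun i s => by ring), ← Finset.sum_sub_distrib]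
  exact Finset.sum_congr rfl fun i _ => by ring

theorem Dt_biExpSum :
    Dt (biExpSum C a b c d a' b' c' d' g)
      = biExpSum (fun i => (d i - d' i) * C i) a b c d a' b' c' d' g := by
  funext x y z t x' y' z' t'
  simp only [Dt, biExpSum]
  rw [deriv_sum_mul_cexp_affine C d (fun i s => by ring),
    deriv_sum_mul_cexp_affine C d' (fun i s => by ring), ← Finset.sum_sub_distrib]
  exact Finset.sum_congr rfl fun i _ => by ring

theorem iterate_biExpSum
    {D : (ℂ → ℂ → ℂ → ℂ → ℂ → ℂ → ℂ → ℂ → ℂ) → ℂ → ℂ → ℂ → ℂ → ℂ → ℂ → ℂ → ℂ → ℂ} (w : ι → ℂ)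
    (hD : ∀ C, D (biExpSum C a b c d a' b' c' d' g)
      = biExpSum (fun i => w i * C i) a b c d a' b' c' d' g) (m : ℕ) :
    D^[m] (biExpSum C a b c d a' b' c' d' g)
      = biExpSum (fun i => w i ^ m * C i) a b c d a' b' c' d' g := by
  induction m with
  | zero => simp only [Function.iterate_zero_apply, pow_zero, one_mul]
  | succ m ih =>
    rw [Function.iterate_succ_apply', ih, hD]
    simp only [pow_succ, mul_assoc, mul_left_comm]

end

noncomputable def expSum {ι : Type*} [Fintype ι] (C a b c d g : ι → ℂ) (x y z t : ℂ) : ℂ :=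
  ∑ i, C i * exp (a i * x + b i * y + c i * z + d i * t + g i)

section

variable {ι κ : Type*} [Fintype ι] [Fintype κ] (C a b c d g : ι → ℂ) (C' a' b' c' d' g' : κ → ℂ)

theorem expSum_mul_expSum :
    (fun x y z t x' y' z' t' => expSum C a b c d g x y z t * expSum C' a' b' c' d' g' x' y' z' t')
      = biExpSum (fun q : ι × κ => C q.1 * C' q.2) (fun q => a q.1) (fun q => b q.1)
          (fun q => c q.1) (fun q => d q.1) (fun q => a' q.2) (fun q => b' q.2)
          (fun q => c' q.2) (fun q => d' q.2) (fun q => g q.1 + g' q.2) := by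
  funext x y z t x' y' z' t'
  simp only [expSum, biExpSum, Finset.sum_mul_sum, Fintype.sum_prod_type]
  refine Finset.sum_congr rfl fun i _ => Finset.sum_congr rfl fun j _ => ?_
  rw [mul_mul_mul_comm, ← exp_add]
  ring_nf

theorem hirota_expSum (m n p k : ℕ) (x y z t : ℂ) :
    hirota m n p k (expSum C a b c d g) (expSum C' a' b' c' d' g') x y z t
      = ∑ i, ∑ j, C i * C' j
          * ((a i - a' j) ^ m * (b i - b' j) ^ n * (c i - c' j) ^ p * (d i - d' j) ^ k)
          * (exp (a i * x + b i * y + c i * z + d i * t + g i)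
            * exp (a' j * x + b' j * y + c' j * z + d' j * t + g' j)) := by
  unfold hirota
  rw [expSum_mul_expSum, iterate_biExpSum (hD := fun C => Dt_biExpSum C ..),
    iterate_biExpSum (hD := fun C => Dz_biExpSum C ..),
    iterate_biExpSum (hD := fun C => Dy_biExpSum C ..),
    iterate_biExpSum (hD := fun C => Dx_biExpSum C ..)]
  simp only [biExpSum, Fintype.sum_prod_type]
  refine Finset.sum_congr rfl fun i _ => Finset.sum_congr rfl fun j _ => ?_
  rw [← exp_add]
  ring_nf

/-- `P(D_x, D_y, D_z, D_t) = D_y D_t - D_x³ D_y + 3 D_x D_z`. -/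
def hirotaSymbol (a b c d : ℂ) : ℂ := b * d - a ^ 3 * b + 3 * a * c

theorem hirota_bilinear_expSum (x y z t : ℂ) :
    hirota 0 1 0 1 (expSum C a b c d g) (expSum C' a' b' c' d' g') x y z t
        - hirota 3 1 0 0 (expSum C a b c d g) (expSum C' a' b' c' d' g') x y z t
        + 3 * hirota 1 0 1 0 (expSum C a b c d g) (expSum C' a' b' c' d' g') x y z t
      = ∑ i, ∑ j, C i * C' j * hirotaSymbol (a i - a' j) (b i - b' j) (c i - c' j) (d i - d' j)
          * (exp (a i * x + b i * y + c i * z + d i * t + g i)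
            * exp (a' j * x + b' j * y + c' j * z + d' j * t + g' j)) := by
  simp only [hirota_expSum, ← Finset.sum_sub_distrib, Finset.mul_sum, ← Finset.sum_add_distrib]
  refine Finset.sum_congr rfl fun i _ => Finset.sum_congr rfl fun j _ => ?_
  simp only [hirotaSymbol]
  ring

end

theorem hirotaSymbol_eq_zero {μ ν κ ϖ : ℂ} (hν : ν ≠ 0) (hϖ : ϖ = -3 * μ * κ / ν + μ ^ 3) :
    hirotaSymbol μ ν κ ϖ = 0 := by
  rw [hirotaSymbol, hϖ]
  field_simp
  ring

/-- The two-soliton tau function `f = 1 + e^{η₁} + e^{η₂} + e^{η₁+η₂+A₁₂}` satisfies the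
bilinear equation `(D_y D_t - D_x^3 D_y + 3 D_x D_z) f·f = 0`, where `e^{A₁₂}` is the
interaction coefficient and `ϖⱼ = -3μⱼκⱼ/νⱼ + μⱼ³`. -/
theorem two_soliton_bilinear (μ₁ μ₂ ν₁ ν₂ κ₁ κ₂ γ₁ γ₂ ϖ₁ ϖ₂ E : ℂ)
    (hν₁ : ν₁ ≠ 0) (hν₂ : ν₂ ≠ 0)
    (hϖ₁ : ϖ₁ = -3 * μ₁ * κ₁ / ν₁ + μ₁ ^ 3)
    (hϖ₂ : ϖ₂ = -3 * μ₂ * κ₂ / ν₂ + μ₂ ^ 3)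
    (hden : (ν₁ + ν₂) * (ϖ₁ + ϖ₂) - (μ₁ + μ₂) ^ 3 * (ν₁ + ν₂)
      + 3 * (μ₁ + μ₂) * (κ₁ + κ₂) ≠ 0)
    (hE : E = -(((ν₁ - ν₂) * (ϖ₁ - ϖ₂) - (μ₁ - μ₂) ^ 3 * (ν₁ - ν₂)
        + 3 * (μ₁ - μ₂) * (κ₁ - κ₂)) /
      ((ν₁ + ν₂) * (ϖ₁ + ϖ₂) - (μ₁ + μ₂) ^ 3 * (ν₁ + ν₂)
        + 3 * (μ₁ + μ₂) * (κ₁ + κ₂))))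
    (f : ℂ → ℂ → ℂ → ℂ → ℂ)
    (hf : f = fun x y z t =>
      1 + Complex.exp (μ₁ * x + ν₁ * y + κ₁ * z + ϖ₁ * t + γ₁)
        + Complex.exp (μ₂ * x + ν₂ * y + κ₂ * z + ϖ₂ * t + γ₂)
        + E * Complex.exp ((μ₁ * x + ν₁ * y + κ₁ * z + ϖ₁ * t + γ₁)
            + (μ₂ * x + ν₂ * y + κ₂ * z + ϖ₂ * t + γ₂))) :
    ∀ x y z t : ℂ,
      hirota 0 1 0 1 f f x y z t - hirota 3 1 0 0 f f x y z t
        + 3 * hirota 1 0 1 0 f f x y z t = 0 := by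
  have hf_expSum : f = expSum ![1, 1, 1, E] ![0, μ₁, μ₂, μ₁ + μ₂] ![0, ν₁, ν₂, ν₁ + ν₂]
      ![0, κ₁, κ₂, κ₁ + κ₂] ![0, ϖ₁, ϖ₂, ϖ₁ + ϖ₂] ![0, γ₁, γ₂, γ₁ + γ₂] := by
    subst hf
    funext x y z t
    simp only [expSum, Fin.sum_univ_four, Matrix.cons_val_zero, Matrix.cons_val_one,
      Matrix.cons_val_two, Matrix.cons_val_three, Matrix.head_cons, Matrix.tail_cons,
      zero_mul, add_zero, exp_zero, one_mul]
    ring_nf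
  intro x y z t
  have hdisp₁ := hirotaSymbol_eq_zero hν₁ hϖ₁
  have hdisp₂ := hirotaSymbol_eq_zero hν₂ hϖ₂
  have hint : E * hirotaSymbol (μ₁ + μ₂) (ν₁ + ν₂) (κ₁ + κ₂) (ϖ₁ + ϖ₂)
      + hirotaSymbol (μ₁ - μ₂) (ν₁ - ν₂) (κ₁ - κ₂) (ϖ₁ - ϖ₂) = 0 := by
    rw [hE, hirotaSymbol, hirotaSymbol, neg_mul, div_mul_cancel₀ _ hden, neg_add_cancel]
  have hX₃ : exp ((μ₁ + μ₂) * x + (ν₁ + ν₂) * y + (κ₁ + κ₂) * z + (ϖ₁ + ϖ₂) * t + (γ₁ + γ₂))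
      = exp (μ₁ * x + ν₁ * y + κ₁ * z + ϖ₁ * t + γ₁)
        * exp (μ₂ * x + ν₂ * y + κ₂ * z + ϖ₂ * t + γ₂) := by
    rw [← exp_add]
    ring_nf
  rw [hf_expSum, hirota_bilinear_expSum]
  simp only [Fin.sum_univ_four, Matrix.cons_val_zero, Matrix.cons_val_one,
    Matrix.cons_val_two, Matrix.cons_val_three, Matrix.head_cons, Matrix.tail_cons,
    zero_mul, add_zero, exp_zero, hX₃]
  unfold hirotaSymbol at hdisp₁ hdisp₂ hint ⊢
  set X₁ := exp (μ₁ * x + ν₁ * y + κ₁ * z + ϖ₁ * t + γ₁)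
  set X₂ := exp (μ₂ * x + ν₂ * y + κ₂ * z + ϖ₂ * t + γ₂)
  linear_combination (2 * X₁ + 2 * E * X₁ * X₂ ^ 2) * hdisp₁
    + (2 * X₂ + 2 * E * X₁ ^ 2 * X₂) * hdisp₂ + 2 * X₁ * X₂ * hint
end

section
/- Let H(D_x,D_y,D_z,D_t) = D_y D_t + 3D_x D_z − D_x³ D_y − 3u₀ D_x² + c. Suppose ϑ(ξ,τ) = Σ_{n∈ℤ} e^{πin²τ+2πinξ} with ξ = αx + ρy + kz + ωt + δ, Im τ > 0, and the two equations Σ_{n∈ℤ}(−16π²n²ρω − 48π²n²αk − 256π⁴n⁴ρα³ + 48u₀π²n²α² + c) e^{2πin²τ} = 0 and Σ_{n∈ℤ}(−4π²(2n−1)²ρω − 12π²(2n−1)²αk − 16π⁴(2n−1)⁴ρα³ + 12π²u₀(2n−1)²α² + c) e^{(2n²−2n+1)πiτ} = 0 hold. Then H(D_x,D_y,D_z,D_t) ϑ(ξ,τ)·ϑ(ξ,τ) = 0. -/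
/-!
Since `ξ = α x + ρ y + k z + ω t + δ` is affine, each Hirota operator applied to `θ(ξ) θ(ξ')` is a
constant multiple of the single operator `∂_u - ∂_v` applied to `ϑ(u) ϑ(v)`. On the double series
`ϑ(u) ϑ(v) = ∑_{m,n} e_m(u) e_n(v)`, with `e_n` the summands of `ϑ`, this operator multiplies the
`(m, n)` term by `2πi (m - n)`, so the left-hand side is `∑_{m,n} H(2πi (m - n)) e_m(ξ) e_n(ξ)` for
the symbol `H` of the equation. Grouping the terms by `q = m + n` and using
`e_m e_n = exp (πiτ (m - n)² / 2) · exp (πiτ q² / 2 + 2πi q ξ)`, the sum over each fibre is a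
multiple of one of the two series in the hypotheses, according to the parity of `q`.
-/
open Complex

namespace Hirota

open scoped Real

section Phase

noncomputable def bilinDeriv (G : ℂ → ℂ → ℂ) : ℂ → ℂ → ℂ :=
  fun u v => deriv (fun s => G s v) u - deriv (fun s => G u s) v

lemma bilinDeriv_smul (c : ℂ) (G : ℂ → ℂ → ℂ) : bilinDeriv (c • G) = c • bilinDeriv G := by
  funext u v
  simp only [bilinDeriv, Pi.smul_apply, smul_eq_mul, deriv_const_mul_field', mul_sub]

-- No differentiability is needed: when `f` is not differentiable at `L x`, both sides are `0`.
lemma deriv_comp_affine {𝕜 E : Type*} [NontriviallyNormedField 𝕜] [NormedAddCommGroup E]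
    [NormedSpace 𝕜 E] (f : 𝕜 → E) {a b : 𝕜} {L : 𝕜 → 𝕜} (hL : ∀ s, L s = a * s + b) (x : 𝕜) :
    deriv (fun s => f (L s)) x = a • deriv f (L x) := by
  simp only [hL]
  exact (deriv_comp_mul_left a (fun y => f (y + b)) x).trans (by rw [deriv_comp_add_const])

def alongPhase (α ρ k ω δ : ℂ) (G : ℂ → ℂ → ℂ) : ℂ → ℂ → ℂ → ℂ → ℂ → ℂ → ℂ → ℂ → ℂ :=
  fun x y z t x' y' z' t' =>
    G (α * x + ρ * y + k * z + ω * t + δ) (α * x' + ρ * y' + k * z' + ω * t' + δ)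

variable {α ρ k ω δ : ℂ}

lemma Dx_alongPhase (G : ℂ → ℂ → ℂ) :
    Dx (alongPhase α ρ k ω δ G) = alongPhase α ρ k ω δ (α • bilinDeriv G) := by
  funext x y z t x' y' z' t'
  simp only [Dx, alongPhase, bilinDeriv, Pi.smul_apply, smul_eq_mul, mul_sub]
  rw [deriv_comp_affine (fun s => G s _) (a := α) (b := ρ * y + k * z + ω * t + δ)
      (fun s => by ring),
    deriv_comp_affine (G _) (a := α) (b := ρ * y' + k * z' + ω * t' + δ) (fun s => by ring),
    smul_eq_mul, smul_eq_mul]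

lemma Dy_alongPhase (G : ℂ → ℂ → ℂ) :
    Dy (alongPhase α ρ k ω δ G) = alongPhase α ρ k ω δ (ρ • bilinDeriv G) := by
  funext x y z t x' y' z' t'
  simp only [Dy, alongPhase, bilinDeriv, Pi.smul_apply, smul_eq_mul, mul_sub]
  rw [deriv_comp_affine (fun s => G s _) (a := ρ) (b := α * x + k * z + ω * t + δ)
      (fun s => by ring),
    deriv_comp_affine (G _) (a := ρ) (b := α * x' + k * z' + ω * t' + δ) (fun s => by ring),
    smul_eq_mul, smul_eq_mul]

lemma Dz_alongPhase (G : ℂ → ℂ → ℂ) :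
    Dz (alongPhase α ρ k ω δ G) = alongPhase α ρ k ω δ (k • bilinDeriv G) := by
  funext x y z t x' y' z' t'
  simp only [Dz, alongPhase, bilinDeriv, Pi.smul_apply, smul_eq_mul, mul_sub]
  rw [deriv_comp_affine (fun s => G s _) (a := k) (b := α * x + ρ * y + ω * t + δ)
      (fun s => by ring),
    deriv_comp_affine (G _) (a := k) (b := α * x' + ρ * y' + ω * t' + δ) (fun s => by ring),
    smul_eq_mul, smul_eq_mul]

lemma Dt_alongPhase (G : ℂ → ℂ → ℂ) :
    Dt (alongPhase α ρ k ω δ G) = alongPhase α ρ k ω δ (ω • bilinDeriv G) := by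
  funext x y z t x' y' z' t'
  simp only [Dt, alongPhase, bilinDeriv, Pi.smul_apply, smul_eq_mul, mul_sub]
  rw [deriv_comp_affine (fun s => G s _) (a := ω) (b := α * x + ρ * y + k * z + δ)
      (fun s => by ring),
    deriv_comp_affine (G _) (a := ω) (b := α * x' + ρ * y' + k * z' + δ) (fun s => by ring),
    smul_eq_mul, smul_eq_mul]

lemma iterate_alongPhase
    {D : (ℂ → ℂ → ℂ → ℂ → ℂ → ℂ → ℂ → ℂ → ℂ) → ℂ → ℂ → ℂ → ℂ → ℂ → ℂ → ℂ → ℂ → ℂ} {a : ℂ}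
    (hD : ∀ G, D (alongPhase α ρ k ω δ G) = alongPhase α ρ k ω δ (a • bilinDeriv G))
    (m j : ℕ) (c : ℂ) (G : ℂ → ℂ → ℂ) :
    D^[m] (alongPhase α ρ k ω δ (c • bilinDeriv^[j] G))
      = alongPhase α ρ k ω δ ((a ^ m * c) • bilinDeriv^[m + j] G) := by
  induction m with
  | zero => simp
  | succ m ih =>
    rw [Function.iterate_succ_apply', ih, hD, bilinDeriv_smul, smul_smul, Nat.succ_add,
      Function.iterate_succ_apply', pow_succ', mul_assoc]

lemma hirota_comp_phase (f : ℂ → ℂ) (m n p q : ℕ) (x y z t : ℂ) :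
    hirota m n p q (fun x y z t => f (α * x + ρ * y + k * z + ω * t + δ))
        (fun x y z t => f (α * x + ρ * y + k * z + ω * t + δ)) x y z t
      = α ^ m * ρ ^ n * k ^ p * ω ^ q * bilinDeriv^[m + n + p + q] (fun u v => f u * f v)
          (α * x + ρ * y + k * z + ω * t + δ) (α * x + ρ * y + k * z + ω * t + δ) := by
  have hG : (fun x y z t x' y' z' t' => f (α * x + ρ * y + k * z + ω * t + δ)
      * f (α * x' + ρ * y' + k * z' + ω * t' + δ))
      = alongPhase α ρ k ω δ ((1 : ℂ) • bilinDeriv^[0] (fun u v => f u * f v)) := by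
    rw [Function.iterate_zero, id, one_smul]
    rfl
  rw [hirota, hG, iterate_alongPhase Dt_alongPhase, iterate_alongPhase Dz_alongPhase,
    iterate_alongPhase Dy_alongPhase, iterate_alongPhase Dx_alongPhase]
  simp only [alongPhase, Pi.smul_apply, smul_eq_mul, mul_one, add_zero, mul_assoc, add_assoc]

end Phase

noncomputable def pairBound (T S S' : ℝ) (J : ℕ) (p : ℤ × ℤ) : ℝ :=
  (|p.1| + |p.2| : ℝ) ^ J *
    (rexp (-π * (T * p.1 ^ 2 - 2 * S * |p.1|)) * rexp (-π * (T * p.2 ^ 2 - 2 * S' * |p.2|)))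

lemma summable_pairBound {T : ℝ} (hT : 0 < T) (S S' : ℝ) (J : ℕ) :
    Summable (pairBound T S S' J) := by
  have hb (S : ℝ) : Summable fun n : ℤ => rexp (-π * (T * n ^ 2 - 2 * S * |n|)) := by
    simpa using summable_pow_mul_jacobiTheta₂_term_bound S hT 0
  have h₁ := (summable_pow_mul_jacobiTheta₂_term_bound S hT J).mul_of_nonneg (hb S')
    (fun _ => by positivity) (fun _ => by positivity)
  have h₂ := (hb S).mul_of_nonneg (summable_pow_mul_jacobiTheta₂_term_bound S' hT J)
    (fun _ => (Real.exp_pos _).le) (fun _ => by positivity)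
  refine Summable.of_nonneg_of_le (fun p => by unfold pairBound; positivity) (fun p => ?_)
    ((h₁.add h₂).mul_left (2 ^ (J - 1)))
  calc pairBound T S S' J p
      ≤ 2 ^ (J - 1) * (((|p.1| : ℤ) : ℝ) ^ J + ((|p.2| : ℤ) : ℝ) ^ J) *
          (rexp (-π * (T * p.1 ^ 2 - 2 * S * |p.1|))
            * rexp (-π * (T * p.2 ^ 2 - 2 * S' * |p.2|))) :=
        mul_le_mul_of_nonneg_right (add_pow_le (by positivity) (by positivity) J) (by positivity)
    _ = _ := by ring

section ThetaSeries

variable {τ : ℂ}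

lemma norm_mul_jacobiTheta₂_term_le (hτ : 0 < τ.im) {c : ℤ × ℤ → ℂ} {C : ℝ} {J : ℕ}
    (hc : ∀ p, ‖c p‖ ≤ C * (|p.1| + |p.2| : ℝ) ^ J) {u v : ℂ} {S S' : ℝ}
    (hu : |u.im| ≤ S) (hv : |v.im| ≤ S') (p : ℤ × ℤ) :
    ‖c p * (jacobiTheta₂_term p.1 u τ * jacobiTheta₂_term p.2 v τ)‖
      ≤ C * pairBound τ.im S S' J p := by
  rw [norm_mul, norm_mul, pairBound, ← mul_assoc C]
  exact mul_le_mul (hc p) (mul_le_mul (norm_jacobiTheta₂_term_le hτ hu le_rfl p.1)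
    (norm_jacobiTheta₂_term_le hτ hv le_rfl p.2) (norm_nonneg _) (by positivity))
    (by positivity) ((norm_nonneg _).trans (hc p))

lemma summable_mul_jacobiTheta₂_term (hτ : 0 < τ.im) {c : ℤ × ℤ → ℂ} {C : ℝ} {J : ℕ}
    (hc : ∀ p, ‖c p‖ ≤ C * (|p.1| + |p.2| : ℝ) ^ J) (u v : ℂ) :
    Summable fun p => c p * (jacobiTheta₂_term p.1 u τ * jacobiTheta₂_term p.2 v τ) :=
  ((summable_pairBound hτ _ _ J).mul_left C).of_norm_bounded
    (norm_mul_jacobiTheta₂_term_le hτ hc le_rfl le_rfl)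

lemma norm_mul_le_of_le_pow {c c' : ℤ × ℤ → ℂ} {C C' : ℝ} {J J' : ℕ}
    (hc : ∀ p, ‖c p‖ ≤ C * (|p.1| + |p.2| : ℝ) ^ J)
    (hc' : ∀ p, ‖c' p‖ ≤ C' * (|p.1| + |p.2| : ℝ) ^ J') (p : ℤ × ℤ) :
    ‖c p * c' p‖ ≤ C * C' * (|p.1| + |p.2| : ℝ) ^ (J + J') := by
  rw [norm_mul, pow_add, mul_mul_mul_comm]
  exact mul_le_mul (hc p) (hc' p) (norm_nonneg _) ((norm_nonneg _).trans (hc p))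

lemma norm_two_pi_I_mul_intCast_le {n : ℤ} {p : ℤ × ℤ} (hn : |n| ≤ |p.1| + |p.2|) :
    ‖2 * π * I * (n : ℂ)‖ ≤ 2 * π * (|p.1| + |p.2| : ℝ) ^ 1 := by
  simp only [norm_mul, Complex.norm_two, norm_I, Complex.norm_of_nonneg Real.pi_pos.le,
    norm_intCast, mul_one, pow_one, ← Int.cast_abs]
  gcongr
  exact_mod_cast hn

lemma norm_two_pi_I_mul_sub_pow_le (j : ℕ) (p : ℤ × ℤ) :
    ‖(2 * π * I * ((p.1 - p.2 : ℤ) : ℂ)) ^ j‖ ≤ (2 * π) ^ j * (|p.1| + |p.2| : ℝ) ^ j := by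
  rw [norm_pow, ← mul_pow]
  gcongr
  simpa using norm_two_pi_I_mul_intCast_le (abs_sub _ _)

lemma hasDerivAt_jacobiTheta₂_term_fst (n : ℤ) (z τ : ℂ) :
    HasDerivAt (jacobiTheta₂_term n · τ) (jacobiTheta₂'_term n z τ) z := by
  have := (((hasDerivAt_id z).const_mul (2 * π * I * n)).add_const (π * I * n ^ 2 * τ)).cexp
  simpa [jacobiTheta₂'_term, jacobiTheta₂_term, mul_comm] using this

lemma hasDerivAt_tsum_mul_jacobiTheta₂_term_fst (hτ : 0 < τ.im) {c : ℤ × ℤ → ℂ} {C : ℝ}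
    {J : ℕ} (hc : ∀ p, ‖c p‖ ≤ C * (|p.1| + |p.2| : ℝ) ^ J) (u v : ℂ) :
    HasDerivAt (fun u => ∑' p, c p * (jacobiTheta₂_term p.1 u τ * jacobiTheta₂_term p.2 v τ))
      (∑' p, c p * (2 * π * I * p.1) * (jacobiTheta₂_term p.1 u τ * jacobiTheta₂_term p.2 v τ))
      u := by
  set S := |u.im| + 1
  have hu : u ∈ {z : ℂ | |z.im| < S} := by simp [S]
  have hconv : Convex ℝ {z : ℂ | |z.im| < S} := by
    simpa only [abs_lt] using! (convex_halfSpace_im_gt _).inter (convex_halfSpace_im_lt _)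
  refine hasDerivAt_tsum_of_isPreconnected
    (g := fun p z => c p * (jacobiTheta₂_term p.1 z τ * jacobiTheta₂_term p.2 v τ))
    (g' := fun p z => c p * (2 * π * I * p.1) *
      (jacobiTheta₂_term p.1 z τ * jacobiTheta₂_term p.2 v τ))
    ((summable_pairBound hτ S |v.im| (J + 1)).mul_left (C * (2 * π)))
    ((_root_.continuous_abs.comp continuous_im).isOpen_preimage _ isOpen_Iio)
    hconv.isPreconnected (fun p z _ => ?_) (fun p z hz => ?_) hu
    (summable_mul_jacobiTheta₂_term hτ hc u v) hu
  · have := ((hasDerivAt_jacobiTheta₂_term_fst p.1 z τ).mul_const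
      (jacobiTheta₂_term p.2 v τ)).const_mul (c p)
    rw [jacobiTheta₂'_term] at this
    exact this.congr_deriv (by ring)
  · exact norm_mul_jacobiTheta₂_term_le hτ (norm_mul_le_of_le_pow hc fun p =>
      norm_two_pi_I_mul_intCast_le (le_add_of_nonneg_right (abs_nonneg p.2))) hz.le le_rfl p

lemma tsum_mul_jacobiTheta₂_term_swap (c : ℤ × ℤ → ℂ) (u v : ℂ) :
    ∑' p : ℤ × ℤ, c p * (jacobiTheta₂_term p.1 u τ * jacobiTheta₂_term p.2 v τ)
      = ∑' p : ℤ × ℤ, c p.swap * (jacobiTheta₂_term p.1 v τ * jacobiTheta₂_term p.2 u τ) := by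
  rw [← (Equiv.prodComm ℤ ℤ).tsum_eq]
  simp [mul_comm]

lemma hasDerivAt_tsum_mul_jacobiTheta₂_term_snd (hτ : 0 < τ.im) {c : ℤ × ℤ → ℂ} {C : ℝ}
    {J : ℕ} (hc : ∀ p, ‖c p‖ ≤ C * (|p.1| + |p.2| : ℝ) ^ J) (u v : ℂ) :
    HasDerivAt (fun v => ∑' p, c p * (jacobiTheta₂_term p.1 u τ * jacobiTheta₂_term p.2 v τ))
      (∑' p, c p * (2 * π * I * p.2) * (jacobiTheta₂_term p.1 u τ * jacobiTheta₂_term p.2 v τ))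
      v := by
  have hc' : ∀ p : ℤ × ℤ, ‖c p.swap‖ ≤ C * (|p.1| + |p.2| : ℝ) ^ J := fun p => by
    simpa [add_comm] using hc p.swap
  simp only [tsum_mul_jacobiTheta₂_term_swap c u,
    tsum_mul_jacobiTheta₂_term_swap (fun p => c p * (2 * π * I * p.2)) u v]
  exact hasDerivAt_tsum_mul_jacobiTheta₂_term_fst hτ hc' v u

noncomputable def thetaPairSeries (τ : ℂ) (j : ℕ) (u v : ℂ) : ℂ :=
  ∑' p : ℤ × ℤ, (2 * π * I * ((p.1 - p.2 : ℤ) : ℂ)) ^ j *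
    (jacobiTheta₂_term p.1 u τ * jacobiTheta₂_term p.2 v τ)

lemma thetaPairSeries_zero (hτ : 0 < τ.im) :
    thetaPairSeries τ 0 = fun u v => jacobiTheta₂ u τ * jacobiTheta₂ v τ := by
  funext u v
  have hs (z : ℂ) : Summable fun n : ℤ => ‖jacobiTheta₂_term n z τ‖ :=
    (hasSum_jacobiTheta₂_term z hτ).summable.norm
  simp [thetaPairSeries, jacobiTheta₂, tsum_mul_tsum_of_summable_norm (hs u) (hs v)]

lemma bilinDeriv_thetaPairSeries (hτ : 0 < τ.im) (j : ℕ) :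
    bilinDeriv (thetaPairSeries τ j) = thetaPairSeries τ (j + 1) := by
  funext u v
  have hc := norm_two_pi_I_mul_sub_pow_le j
  have hfst := norm_mul_le_of_le_pow hc fun p =>
    norm_two_pi_I_mul_intCast_le (le_add_of_nonneg_right (abs_nonneg p.2))
  have hsnd := norm_mul_le_of_le_pow hc fun p =>
    norm_two_pi_I_mul_intCast_le (le_add_of_nonneg_left (abs_nonneg p.1))
  simp only [bilinDeriv, thetaPairSeries]
  rw [(hasDerivAt_tsum_mul_jacobiTheta₂_term_fst hτ hc u v).deriv,
    (hasDerivAt_tsum_mul_jacobiTheta₂_term_snd hτ hc u v).deriv,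
    ← (summable_mul_jacobiTheta₂_term hτ hfst u v).tsum_sub
      (summable_mul_jacobiTheta₂_term hτ hsnd u v)]
  congr 1 with p
  push_cast
  ring

lemma iterate_bilinDeriv_jacobiTheta₂ (hτ : 0 < τ.im) (j : ℕ) :
    bilinDeriv^[j] (fun u v => jacobiTheta₂ u τ * jacobiTheta₂ v τ) = thetaPairSeries τ j := by
  induction j with
  | zero => exact (thetaPairSeries_zero hτ).symm
  | succ j ih => rw [Function.iterate_succ_apply', ih, bilinDeriv_thetaPairSeries hτ]

end ThetaSeries

lemma tsum_prod_eq_tsum_tsum_antidiagonal {E : Type*} [NormedAddCommGroup E] [CompleteSpace E]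
    {f : ℤ × ℤ → E} (hf : Summable f) : ∑' p, f p = ∑' q : ℤ, ∑' n : ℤ, f (n, q - n) := by
  let e : ℤ × ℤ ≃ ℤ × ℤ :=
    { toFun := fun p => (p.2, p.1 - p.2)
      invFun := fun p => (p.1 + p.2, p.1)
      left_inv := fun p => by simp
      right_inv := fun p => by simp }
  rw [← e.tsum_eq]
  exact (e.summable_iff.mpr hf).tsum_prod

lemma tsum_comp_two_mul_sub_eq_zero {E : Type*} [AddCommMonoid E] [TopologicalSpace E]
    (B : ℤ → E) (h₀ : ∑' n, B (2 * n) = 0) (h₁ : ∑' n, B (2 * n - 1) = 0) (q : ℤ) :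
    ∑' n, B (2 * n - q) = 0 := by
  obtain ⟨r, rfl | rfl⟩ := Int.even_or_odd' q
  · rw [← (Equiv.addRight r).tsum_eq]
    exact (tsum_congr fun n => congrArg B (by simp only [Equiv.coe_addRight]; ring)).trans h₀
  · rw [← (Equiv.addRight r).tsum_eq]
    exact (tsum_congr fun n => congrArg B (by simp only [Equiv.coe_addRight]; ring)).trans h₁

lemma jacobiTheta₂_term_mul_jacobiTheta₂_term (a b : ℤ) (ξ τ : ℂ) :
    jacobiTheta₂_term a ξ τ * jacobiTheta₂_term b ξ τ
      = cexp (π * I * ((a - b : ℤ) : ℂ) ^ 2 / 2 * τ)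
        * cexp (π * I * ((a + b : ℤ) : ℂ) ^ 2 / 2 * τ + 2 * π * I * ((a + b : ℤ) : ℂ) * ξ) := by
  rw [jacobiTheta₂_term, jacobiTheta₂_term, ← Complex.exp_add, ← Complex.exp_add]
  congr 1
  push_cast
  ring

lemma tsum_mul_jacobiTheta₂_term_mul_eq_zero {τ : ℂ} {A : ℤ → ℂ} (ξ : ℂ)
    (hA : Summable fun p : ℤ × ℤ =>
      A (p.1 - p.2) * (jacobiTheta₂_term p.1 ξ τ * jacobiTheta₂_term p.2 ξ τ))
    (h₀ : ∑' n : ℤ, A (2 * n) * cexp (π * I * ((2 * n : ℤ) : ℂ) ^ 2 / 2 * τ) = 0)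
    (h₁ : ∑' n : ℤ, A (2 * n - 1) * cexp (π * I * ((2 * n - 1 : ℤ) : ℂ) ^ 2 / 2 * τ) = 0) :
    ∑' p : ℤ × ℤ, A (p.1 - p.2) * (jacobiTheta₂_term p.1 ξ τ * jacobiTheta₂_term p.2 ξ τ)
      = 0 := by
  have hfiber (q : ℤ) : ∑' n : ℤ, A (n - (q - n)) *
      (jacobiTheta₂_term n ξ τ * jacobiTheta₂_term (q - n) ξ τ)
      = cexp (π * I * (q : ℂ) ^ 2 / 2 * τ + 2 * π * I * q * ξ) *
        ∑' n : ℤ, A (2 * n - q) * cexp (π * I * ((2 * n - q : ℤ) : ℂ) ^ 2 / 2 * τ) := by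
    rw [← tsum_mul_left]
    refine tsum_congr fun n => ?_
    rw [jacobiTheta₂_term_mul_jacobiTheta₂_term, show n - (q - n) = 2 * n - q by ring,
      show n + (q - n) = q by ring]
    ring
  rw [tsum_prod_eq_tsum_tsum_antidiagonal hA]
  simp only [hfiber, tsum_comp_two_mul_sub_eq_zero
    (fun d => A d * cexp (π * I * (d : ℂ) ^ 2 / 2 * τ)) h₀ h₁, mul_zero, tsum_zero]

section Symbol

-- `H(α s, ρ s, k s, ω s)`: the symbol of the bilinear operator `H(D_x, D_y, D_z, D_t)`.
def bilinearSymbol (α ρ k ω u₀ c s : ℂ) : ℂ :=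
  (ρ * ω + 3 * α * k - 3 * u₀ * α ^ 2) * s ^ 2 - ρ * α ^ 3 * s ^ 4 + c

variable {α ρ k ω u₀ c : ℂ}

lemma bilinearSymbol_two_pi_I_mul (d : ℂ) :
    bilinearSymbol α ρ k ω u₀ c (2 * π * I * d)
      = -4 * (π : ℂ) ^ 2 * d ^ 2 * ρ * ω - 12 * (π : ℂ) ^ 2 * d ^ 2 * α * k
        - 16 * (π : ℂ) ^ 4 * d ^ 4 * ρ * α ^ 3 + 12 * (π : ℂ) ^ 2 * u₀ * d ^ 2 * α ^ 2 + c := by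
  rw [bilinearSymbol]
  linear_combination (4 * (π : ℂ) ^ 2 * d ^ 2 * (ρ * ω + 3 * α * k - 3 * u₀ * α ^ 2)
    + 16 * (π : ℂ) ^ 4 * d ^ 4 * ρ * α ^ 3 * (1 - I ^ 2)) * I_sq

variable (α ρ k ω u₀ c) in
lemma hasSum_bilinearSymbol {τ : ℂ} (hτ : 0 < τ.im) (ξ : ℂ) :
    HasSum (fun p : ℤ × ℤ => bilinearSymbol α ρ k ω u₀ c (2 * π * I * ((p.1 - p.2 : ℤ) : ℂ)) *
        (jacobiTheta₂_term p.1 ξ τ * jacobiTheta₂_term p.2 ξ τ))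
      ((ρ * ω + 3 * α * k - 3 * u₀ * α ^ 2) * thetaPairSeries τ 2 ξ ξ
        - ρ * α ^ 3 * thetaPairSeries τ 4 ξ ξ + c * thetaPairSeries τ 0 ξ ξ) := by
  have hs (j : ℕ) := (summable_mul_jacobiTheta₂_term hτ (norm_two_pi_I_mul_sub_pow_le j) ξ ξ).hasSum
  have hsum := (((hs 2).mul_left (ρ * ω + 3 * α * k - 3 * u₀ * α ^ 2)).sub
    ((hs 4).mul_left (ρ * α ^ 3))).add ((hs 0).mul_left c)
  exact hsum.congr_fun fun p => by simp only [bilinearSymbol]; ring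

lemma tsum_bilinearSymbol_even_eq_zero {τ : ℂ}
    (h0 : ∑' n : ℤ,
      (-16 * (Real.pi : ℂ) ^ 2 * (n : ℂ) ^ 2 * ρ * ω
        - 48 * (Real.pi : ℂ) ^ 2 * (n : ℂ) ^ 2 * α * k
        - 256 * (Real.pi : ℂ) ^ 4 * (n : ℂ) ^ 4 * ρ * α ^ 3
        + 48 * u₀ * (Real.pi : ℂ) ^ 2 * (n : ℂ) ^ 2 * α ^ 2 + c) *
      Complex.exp (2 * Real.pi * Complex.I * (n : ℂ) ^ 2 * τ) = 0) :
    ∑' n : ℤ, bilinearSymbol α ρ k ω u₀ c (2 * π * I * ((2 * n : ℤ) : ℂ))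
      * cexp (π * I * ((2 * n : ℤ) : ℂ) ^ 2 / 2 * τ) = 0 := by
  rw [← h0]
  refine tsum_congr fun n => ?_
  rw [bilinearSymbol_two_pi_I_mul]
  push_cast
  ring_nf

lemma tsum_bilinearSymbol_odd_eq_zero {τ : ℂ}
    (h1 : ∑' n : ℤ,
      (-4 * (Real.pi : ℂ) ^ 2 * (2 * (n : ℂ) - 1) ^ 2 * ρ * ω
        - 12 * (Real.pi : ℂ) ^ 2 * (2 * (n : ℂ) - 1) ^ 2 * α * k
        - 16 * (Real.pi : ℂ) ^ 4 * (2 * (n : ℂ) - 1) ^ 4 * ρ * α ^ 3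
        + 12 * (Real.pi : ℂ) ^ 2 * u₀ * (2 * (n : ℂ) - 1) ^ 2 * α ^ 2 + c) *
      Complex.exp ((2 * (n : ℂ) ^ 2 - 2 * (n : ℂ) + 1) * Real.pi * Complex.I * τ) = 0) :
    ∑' n : ℤ, bilinearSymbol α ρ k ω u₀ c (2 * π * I * ((2 * n - 1 : ℤ) : ℂ))
      * cexp (π * I * ((2 * n - 1 : ℤ) : ℂ) ^ 2 / 2 * τ) = 0 := by
  have hterm (n : ℤ) : (-4 * (Real.pi : ℂ) ^ 2 * (2 * (n : ℂ) - 1) ^ 2 * ρ * ω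
        - 12 * (Real.pi : ℂ) ^ 2 * (2 * (n : ℂ) - 1) ^ 2 * α * k
        - 16 * (Real.pi : ℂ) ^ 4 * (2 * (n : ℂ) - 1) ^ 4 * ρ * α ^ 3
        + 12 * (Real.pi : ℂ) ^ 2 * u₀ * (2 * (n : ℂ) - 1) ^ 2 * α ^ 2 + c) *
      Complex.exp ((2 * (n : ℂ) ^ 2 - 2 * (n : ℂ) + 1) * Real.pi * Complex.I * τ)
      = bilinearSymbol α ρ k ω u₀ c (2 * π * I * ((2 * n - 1 : ℤ) : ℂ))
        * cexp (π * I * ((2 * n - 1 : ℤ) : ℂ) ^ 2 / 2 * τ) * cexp (π * I * τ / 2) := by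
    rw [mul_assoc (bilinearSymbol _ _ _ _ _ _ _), ← Complex.exp_add]
    push_cast
    rw [bilinearSymbol_two_pi_I_mul]
    ring_nf
  rw [tsum_congr hterm, tsum_mul_right] at h1
  exact (mul_eq_zero.mp h1).resolve_right (Complex.exp_ne_zero _)

end Symbol

end Hirota

open Hirota in
/-- If `(α, ρ, k, ω, u₀, c)` satisfy the two series equations `H̃(0) = 0` and `H̃(1) = 0`,
then `(D_y D_t + 3D_x D_z - D_x³D_y - 3u₀D_x² + c) ϑ(ξ,τ)·ϑ(ξ,τ) = 0`. -/
theorem one_periodic_bilinear (τ α ρ k ω δ u₀ c : ℂ) (hτ : 0 < τ.im)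
    (θ : ℂ → ℂ → ℂ → ℂ → ℂ)
    (hθ : θ = fun x y z t => ∑' n : ℤ,
      Complex.exp (Real.pi * Complex.I * (n : ℂ) ^ 2 * τ
        + 2 * Real.pi * Complex.I * n * (α * x + ρ * y + k * z + ω * t + δ)))
    (h0 : ∑' n : ℤ,
      (-16 * (Real.pi : ℂ) ^ 2 * (n : ℂ) ^ 2 * ρ * ω
        - 48 * (Real.pi : ℂ) ^ 2 * (n : ℂ) ^ 2 * α * k
        - 256 * (Real.pi : ℂ) ^ 4 * (n : ℂ) ^ 4 * ρ * α ^ 3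
        + 48 * u₀ * (Real.pi : ℂ) ^ 2 * (n : ℂ) ^ 2 * α ^ 2 + c) *
      Complex.exp (2 * Real.pi * Complex.I * (n : ℂ) ^ 2 * τ) = 0)
    (h1 : ∑' n : ℤ,
      (-4 * (Real.pi : ℂ) ^ 2 * (2 * (n : ℂ) - 1) ^ 2 * ρ * ω
        - 12 * (Real.pi : ℂ) ^ 2 * (2 * (n : ℂ) - 1) ^ 2 * α * k
        - 16 * (Real.pi : ℂ) ^ 4 * (2 * (n : ℂ) - 1) ^ 4 * ρ * α ^ 3
        + 12 * (Real.pi : ℂ) ^ 2 * u₀ * (2 * (n : ℂ) - 1) ^ 2 * α ^ 2 + c) *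
      Complex.exp ((2 * (n : ℂ) ^ 2 - 2 * (n : ℂ) + 1) * Real.pi * Complex.I * τ) = 0) :
    ∀ x y z t : ℂ,
      hirota 0 1 0 1 θ θ x y z t + 3 * hirota 1 0 1 0 θ θ x y z t
        - hirota 3 1 0 0 θ θ x y z t - 3 * u₀ * hirota 2 0 0 0 θ θ x y z t
        + c * (θ x y z t) ^ 2 = 0 := by
  intro x y z t
  have hθ' : θ = fun x y z t => jacobiTheta₂ (α * x + ρ * y + k * z + ω * t + δ) τ := by
    simp only [hθ, jacobiTheta₂, jacobiTheta₂_term, add_comm]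
  have hsq : ∀ ξ, jacobiTheta₂ ξ τ ^ 2 = thetaPairSeries τ 0 ξ ξ := fun ξ => by
    rw [thetaPairSeries_zero hτ, sq]
  rw [hθ']
  simp only [hirota_comp_phase (jacobiTheta₂ · τ), iterate_bilinDeriv_jacobiTheta₂ hτ, hsq]
  have hH := hasSum_bilinearSymbol α ρ k ω u₀ c hτ (α * x + ρ * y + k * z + ω * t + δ)
  have h := hH.tsum_eq.symm.trans (tsum_mul_jacobiTheta₂_term_mul_eq_zero
    (A := fun d => bilinearSymbol α ρ k ω u₀ c (2 * Real.pi * I * d)) _ hH.summable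
    (tsum_bilinearSymbol_even_eq_zero h0) (tsum_bilinearSymbol_odd_eq_zero h1))
  simp only [pow_zero, pow_one, one_mul, mul_one]
  linear_combination h
end
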